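/- Let K be a field and q ∈ K a unit that is not a root of unity. Define [n]_q := (q^n − q^{−n})/(q − q^{−1}), [n]_q! := ∏_{l=1}^{n}[l]_q, and [n choose m]_q := [n]_q!/([m]_q!·[n−m]_q!). Let V be a finite-dimensional K-vector space, d ≥ 0, b ∈ K nonzero, and A, A* : V → V linear maps. Suppose V_i is the (b·q^{2i−d})-eigenspace of A for 0 ≤ i ≤ d, V = V_0 ⊕ ⋯ ⊕ V_d, and A* V_i ⊆ V_{i−1} + V_i + V_{i+1} for all i (with V_{−1} = V_{d+1} = 0). Then for every integer r ≥ 1, Lusztig's higher order q-Serre relation holds: Σ_{j=0}^{2r+1} (−1)^j·[2r+1 choose j]_q·A^{2r+1−j} ∘ (A*)^r ∘ A^j = 0 as a linear map on V. -/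

import Mathlib

/-- The q-integer `[n]_q = (q^n - q^{-n})/(q - q^{-1})`. -/
def qInt {K : Type*} [Field K] (q : K) (n : ℕ) : K :=
  (q ^ n - q⁻¹ ^ n) / (q - q⁻¹)

/-- The q-factorial `[n]_q! = ∏_{l=1}^n [l]_q`. -/
def qFact {K : Type*} [Field K] (q : K) (n : ℕ) : K :=
  ∏ l ∈ Finset.Icc 1 n, qInt q l

/-- The q-binomial coefficient `[n choose m]_q = [n]_q!/([m]_q! [n-m]_q!)`. -/
def qBinom {K : Type*} [Field K] (q : K) (n m : ℕ) : K :=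
  qFact q n / (qFact q m * qFact q (n - m))

/-!
Write `θ k = b q^(2k-d)` and `n = 2r+1`. On an eigenvector `v ∈ V_i` the operator
`Σ_j (-1)^j [n choose j]_q A^(n-j) (A*)^r A^j` acts as `p(A) (A*)^r`, where
`p = Σ_j (-1)^j [n choose j]_q θ_i^j X^(n-j)`. By the q-binomial theorem
`p = ∏_{l=0}^{2r} (X - q^(2l-2r) θ_i) = ∏_{k=i-r}^{i+r} (X - θ_k)`, and this polynomial in `A`
kills `V_{i-r} + ⋯ + V_{i+r}`, which contains `(A*)^r v` by the tridiagonal condition.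
-/

open Polynomial Finset

lemma sum_C_mul_X_pow_mul_X_sub_C {R : Type*} [CommRing R] {n : ℕ} {a e : ℕ → R} {c : R}
    (h0 : e 0 = a 0) (hsucc : ∀ j < n, e (j + 1) = a (j + 1) - c * a j)
    (hlast : e (n + 1) = -(c * a n)) :
    (∑ j ∈ range (n + 1), C (a j) * X ^ (n - j)) * (X - C c) =
      ∑ j ∈ range (n + 2), C (e j) * X ^ (n + 1 - j) := by
  have hmid : ∑ j ∈ range n, C (e (j + 1)) * X ^ (n - j) =
      ∑ j ∈ range n, C (a (j + 1)) * X ^ (n - (j + 1)) * X -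
        ∑ j ∈ range n, C (a j) * X ^ (n - j) * C c := by
    rw [← sum_sub_distrib]
    refine sum_congr rfl fun j hj => ?_
    rw [hsucc j (mem_range.mp hj), C_sub, C_mul, mul_assoc, ← pow_succ,
      show n - (j + 1) + 1 = n - j by have := mem_range.mp hj; omega]
    ring
  rw [sum_range_succ' (fun j => C (e j) * X ^ (n + 1 - j)),
    sum_range_succ (fun j => C (e (j + 1)) * X ^ (n + 1 - (j + 1))), h0, hlast, mul_sub, sum_mul,
    sum_mul, sum_range_succ' (fun j => C (a j) * X ^ (n - j) * X),
    sum_range_succ (fun j => C (a j) * X ^ (n - j) * C c)]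
  simp only [Nat.add_sub_add_right, Nat.sub_zero, Nat.sub_self, pow_zero, C_neg, C_mul]
  rw [hmid]
  ring

section QNumbers

variable {K : Type*} [Field K] {q : K}

lemma qInt_add (m n : ℕ) : qInt q (m + n) = q⁻¹ ^ m * qInt q n + q ^ n * qInt q m := by
  simp only [qInt, pow_add]
  ring

lemma qFact_zero : qFact q 0 = 1 := by simp [qFact]

lemma qFact_succ (n : ℕ) : qFact q (n + 1) = qFact q n * qInt q (n + 1) :=
  prod_Icc_succ_top (by omega) _

lemma pow_sub_inv_pow_ne_zero (hq : q ≠ 0) (hqroot : ∀ n : ℕ, 0 < n → q ^ n ≠ 1) {n : ℕ}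
    (hn : 0 < n) : q ^ n - q⁻¹ ^ n ≠ 0 := by
  intro h
  refine hqroot (2 * n) (by omega) ?_
  calc q ^ (2 * n) = q⁻¹ ^ n * q ^ n := by rw [← sub_eq_zero.mp h, two_mul, pow_add]
    _ = 1 := by rw [inv_pow, inv_mul_cancel₀ (pow_ne_zero _ hq)]

lemma qInt_ne_zero (hq : q ≠ 0) (hqroot : ∀ n : ℕ, 0 < n → q ^ n ≠ 1) {n : ℕ}
    (hn : 0 < n) : qInt q n ≠ 0 :=
  div_ne_zero (pow_sub_inv_pow_ne_zero hq hqroot hn)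
    (by simpa using pow_sub_inv_pow_ne_zero hq hqroot one_pos)

lemma qFact_ne_zero (hq : q ≠ 0) (hqroot : ∀ n : ℕ, 0 < n → q ^ n ≠ 1) (n : ℕ) :
    qFact q n ≠ 0 :=
  prod_ne_zero_iff.mpr fun _ hl => qInt_ne_zero hq hqroot (mem_Icc.mp hl).1

lemma qBinom_zero_right (hq : q ≠ 0) (hqroot : ∀ n : ℕ, 0 < n → q ^ n ≠ 1) (n : ℕ) :
    qBinom q n 0 = 1 := by
  rw [qBinom, qFact_zero, one_mul, Nat.sub_zero, div_self (qFact_ne_zero hq hqroot n)]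

lemma qBinom_self (hq : q ≠ 0) (hqroot : ∀ n : ℕ, 0 < n → q ^ n ≠ 1) (n : ℕ) :
    qBinom q n n = 1 := by
  rw [qBinom, Nat.sub_self, qFact_zero, mul_one, div_self (qFact_ne_zero hq hqroot n)]

lemma qBinom_succ_succ (hq : q ≠ 0) (hqroot : ∀ n : ℕ, 0 < n → q ^ n ≠ 1) {n j : ℕ}
    (hj : j < n) :
    qBinom q (n + 1) (j + 1) =
      q⁻¹ ^ (j + 1) * qBinom q n (j + 1) + q ^ (n - j) * qBinom q n j := by
  obtain ⟨p, rfl⟩ : ∃ p, n = j + p + 1 := ⟨n - j - 1, by omega⟩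
  have hsplit : qInt q (j + p + 1 + 1) =
      q⁻¹ ^ (j + 1) * qInt q (p + 1) + q ^ (p + 1) * qInt q (j + 1) := by
    rw [← qInt_add]
    ring_nf
  simp only [qBinom, show j + p + 1 + 1 - (j + 1) = p + 1 by omega,
    show j + p + 1 - (j + 1) = p by omega, show j + p + 1 - j = p + 1 by omega]
  rw [qFact_succ (j + p + 1), hsplit, qFact_succ j, qFact_succ p]
  have := qFact_ne_zero hq hqroot
  have := qInt_ne_zero hq hqroot (Nat.succ_pos j)
  have := qInt_ne_zero hq hqroot (Nat.succ_pos p)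
  field_simp

theorem prod_X_sub_C_zpow_mul_eq_sum_qBinom (hq : q ≠ 0)
    (hqroot : ∀ n : ℕ, 0 < n → q ^ n ≠ 1) (n : ℕ) (t : K) :
    ∏ l ∈ range n, (X - C (q ^ (2 * (l : ℤ) + 1 - n) * t)) =
      ∑ j ∈ range (n + 1), C ((-1) ^ j * qBinom q n j * t ^ j) * X ^ (n - j) := by
  induction n generalizing t with
  | zero => simp [qBinom, qFact_zero]
  | succ n ih =>
    have hlow (l : ℕ) :
        q ^ (2 * (l : ℤ) + 1 - ↑(n + 1)) * t = q ^ (2 * (l : ℤ) + 1 - n) * (q⁻¹ * t) := by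
      rw [← mul_assoc, ← zpow_neg_one, ← zpow_add₀ hq]
      push_cast
      ring_nf
    have htop : q ^ (2 * (n : ℤ) + 1 - ↑(n + 1)) = q ^ n := by
      rw [← zpow_natCast]
      push_cast
      ring_nf
    rw [prod_range_succ, htop]
    simp only [hlow]
    rw [ih]
    apply sum_C_mul_X_pow_mul_X_sub_C
    · simp [qBinom_zero_right hq hqroot]
    · intro j hj
      rw [qBinom_succ_succ hq hqroot hj]
      have hqn : q ^ n = q ^ (n - j) * q ^ j := by rw [← pow_add, Nat.sub_add_cancel hj.le]
      have hqj : q⁻¹ ^ j * q ^ j = 1 := by rw [inv_pow, inv_mul_cancel₀ (pow_ne_zero _ hq)]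
      rw [hqn, mul_pow, mul_pow]
      linear_combination ((-1) ^ j * t ^ (j + 1) * q ^ (n - j) * qBinom q n j) * hqj
    · have hqn : q⁻¹ ^ n * q ^ n = 1 := by rw [inv_pow, inv_mul_cancel₀ (pow_ne_zero _ hq)]
      rw [qBinom_self hq hqroot, qBinom_self hq hqroot, mul_pow]
      linear_combination ((-1) ^ n * t ^ (n + 1)) * hqn

end QNumbers

lemma prod_Icc_sub_add_eq_prod_range {M : Type*} [CommMonoid M] (f : ℤ → M) (i : ℤ)
    (r : ℕ) : ∏ k ∈ Icc (i - r) (i + r), f k = ∏ l ∈ range (2 * r + 1), f (i - r + l) := by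
  refine prod_nbij' (fun k => (k - (i - r)).toNat) (fun l => i - r + l) ?_ ?_ ?_ ?_ ?_ <;>
    intro k hk <;> simp only [mem_Icc, mem_range] at hk
  all_goals first | (simp only [mem_Icc, mem_range]; omega) | (congr 1; omega)

section Tridiagonal

variable {K V : Type*} [Field K] [AddCommGroup V] [Module K V]

lemma sup_eigenspace_le_ker_aeval_prod {ι : Type*} (A : Module.End K V) (s : Finset ι)
    (μ : ι → K) :
    s.sup (fun k => A.eigenspace (μ k)) ≤
      LinearMap.ker (aeval A (∏ k ∈ s, (X - C (μ k)))) :=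
  Finset.sup_le fun k hk v hv => by
    rw [LinearMap.mem_ker, Module.End.aeval_apply_of_mem_apply_eq_smul
      (Module.End.mem_eigenspace_iff.mp hv), eval_prod, prod_eq_zero hk (by simp), zero_smul]

lemma sum_smul_pow_mul_mul_pow_apply {A : Module.End K V} (B : Module.End K V) {θ : K} {v : V}
    (hv : A v = θ • v) (s : Finset ℕ) (n : ℕ) (c : ℕ → K) :
    (∑ j ∈ s, c j • (A ^ (n - j) * B * A ^ j)) v =
      aeval A (∑ j ∈ s, C (c j * θ ^ j) * X ^ (n - j)) (B v) := by
  simp only [LinearMap.sum_apply, map_sum]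
  refine sum_congr rfl fun j _ => ?_
  have hAj : (A ^ j) v = θ ^ j • v := by
    simpa using Module.End.aeval_apply_of_mem_apply_eq_smul (p := X ^ j) hv
  simp only [LinearMap.smul_apply, Module.End.mul_apply, hAj, map_smul, smul_smul, map_mul,
    aeval_C, aeval_X_pow, Module.algebraMap_end_apply, mul_comm]

lemma map_pow_le_sup_Icc (f : Module.End K V) (W : ℤ → Submodule K V)
    (hf : ∀ i, (W i).map f ≤ W (i - 1) ⊔ W i ⊔ W (i + 1)) (r : ℕ) (i : ℤ) :
    (W i).map (f ^ r) ≤ (Icc (i - r) (i + r)).sup W := by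
  induction r generalizing i with
  | zero => simp [Module.End.one_eq_id]
  | succ r ih =>
    rw [pow_succ, Module.End.mul_eq_comp, Submodule.map_comp]
    refine (Submodule.map_mono (hf i)).trans ?_
    simp only [Submodule.map_sup]
    refine sup_le (sup_le ?_ ?_) ?_ <;>
      exact (ih _).trans (sup_mono (Icc_subset_Icc (by push_cast; omega) (by push_cast; omega)))

variable (A : Module.End K V) (b q : K) (d : ℕ)

/-- The paper's `V_i`, extended by `V_i = 0` for integers `i ∉ [0, d]`. -/
def paddedEigenspace (i : ℤ) : Submodule K V :=
  if 0 ≤ i ∧ i ≤ d then A.eigenspace (b * q ^ (2 * i - d)) else ⊥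

lemma paddedEigenspace_le_eigenspace (i : ℤ) :
    paddedEigenspace A b q d i ≤ A.eigenspace (b * q ^ (2 * i - d)) := by
  unfold paddedEigenspace
  split_ifs
  exacts [le_rfl, bot_le]

lemma paddedEigenspace_of_le {i : ℕ} (hi : i ≤ d) :
    paddedEigenspace A b q d i = A.eigenspace (b * q ^ (2 * (i : ℤ) - d)) :=
  if_pos ⟨i.cast_nonneg, by exact_mod_cast hi⟩

variable {A b q d} in
lemma map_paddedEigenspace_le {Astar : Module.End K V}
    (htri : ∀ i, i ≤ d →
      Submodule.map Astar (Module.End.eigenspace A (b * q ^ (2 * (i : ℤ) - (d : ℤ)))) ≤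
      (if i = 0 then ⊥ else Module.End.eigenspace A (b * q ^ (2 * ((i : ℤ) - 1) - (d : ℤ))))
        ⊔ Module.End.eigenspace A (b * q ^ (2 * (i : ℤ) - (d : ℤ)))
        ⊔ (if i = d then ⊥ else
            Module.End.eigenspace A (b * q ^ (2 * ((i : ℤ) + 1) - (d : ℤ))))) (i : ℤ) :
    (paddedEigenspace A b q d i).map Astar ≤ paddedEigenspace A b q d (i - 1) ⊔
      paddedEigenspace A b q d i ⊔ paddedEigenspace A b q d (i + 1) := by
  by_cases hi : 0 ≤ i ∧ i ≤ d
  · lift i to ℕ using hi.1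
    have hid : i ≤ d := by exact_mod_cast hi.2
    rw [paddedEigenspace_of_le A b q d hid]
    refine (htri i hid).trans (sup_le_sup (sup_le_sup ?_ le_rfl) ?_) <;> split_ifs <;>
      first | exact bot_le | rw [paddedEigenspace, if_pos (by omega)]
  · rw [paddedEigenspace, if_neg hi, Submodule.map_bot]
    exact bot_le

end Tridiagonal

theorem stmt15_general (K V : Type*) [Field K] [AddCommGroup V] [Module K V]
    (q : K) (hq : q ≠ 0) (hqroot : ∀ n : ℕ, 0 < n → q ^ n ≠ 1)
    (d : ℕ) (b : K) (A Astar : Module.End K V)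
    (hsum : DirectSum.IsInternal
      (fun i : Fin (d + 1) => Module.End.eigenspace A (b * q ^ (2 * (i.1 : ℤ) - (d : ℤ)))))
    (htri : ∀ i, i ≤ d →
      Submodule.map Astar (Module.End.eigenspace A (b * q ^ (2 * (i : ℤ) - (d : ℤ)))) ≤
      (if i = 0 then ⊥ else Module.End.eigenspace A (b * q ^ (2 * ((i : ℤ) - 1) - (d : ℤ))))
        ⊔ Module.End.eigenspace A (b * q ^ (2 * (i : ℤ) - (d : ℤ)))
        ⊔ (if i = d then ⊥ else
            Module.End.eigenspace A (b * q ^ (2 * ((i : ℤ) + 1) - (d : ℤ))))) :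
    ∀ r : ℕ, 1 ≤ r →
      ∑ j ∈ Finset.range (2 * r + 2),
        ((-1 : K) ^ j * qBinom q (2 * r + 1) j) •
          (A ^ (2 * r + 1 - j) * Astar ^ r * A ^ j) = 0 := by
  intro r _
  refine LinearMap.ker_eq_top.mp (eq_top_iff.mpr ?_)
  rw [← hsum.submodule_iSup_eq_top]
  refine iSup_le fun i v hv => LinearMap.mem_ker.mpr ?_
  have hvi : v ∈ paddedEigenspace A b q d i := by
    rwa [paddedEigenspace_of_le A b q d (Nat.lt_succ_iff.mp i.2)]
  have hkill := sup_eigenspace_le_ker_aeval_prod A _ _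
    (sup_mono_fun (fun k _ => paddedEigenspace_le_eigenspace A b q d k)
      (map_pow_le_sup_Icc Astar _ (map_paddedEigenspace_le htri) r i ⟨v, hvi, rfl⟩))
  have hθ (l : ℕ) : q ^ (2 * (l : ℤ) + 1 - ↑(2 * r + 1)) * (b * q ^ (2 * (i : ℤ) - d)) =
      b * q ^ (2 * ((i : ℤ) - r + l) - d) := by
    rw [mul_left_comm, ← zpow_add₀ hq]
    push_cast
    ring_nf
  rw [sum_smul_pow_mul_mul_pow_apply _ (Module.End.mem_eigenspace_iff.mp hv),
    ← prod_X_sub_C_zpow_mul_eq_sum_qBinom hq hqroot]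
  simpa only [hθ, prod_Icc_sub_add_eq_prod_range, LinearMap.mem_ker] using hkill

/-- Lusztig's higher order q-Serre relations for a tridiagonal pair with
eigenvalues `b q^(2i-d)` (the case `ρ₀ = 0`):
`Σ_{j=0}^{2r+1} (-1)^j [2r+1 choose j]_q A^{2r+1-j} (A*)^r A^j = 0`. -/
theorem stmt15 (K V : Type*) [Field K] [AddCommGroup V] [Module K V] [FiniteDimensional K V]
    (q : K) (hq : q ≠ 0) (hqroot : ∀ n : ℕ, 0 < n → q ^ n ≠ 1)
    (d : ℕ) (b : K) (hb : b ≠ 0) (A Astar : Module.End K V)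
    (hsum : DirectSum.IsInternal
      (fun i : Fin (d + 1) => Module.End.eigenspace A (b * q ^ (2 * (i.1 : ℤ) - (d : ℤ)))))
    (htri : ∀ i, i ≤ d →
      Submodule.map Astar (Module.End.eigenspace A (b * q ^ (2 * (i : ℤ) - (d : ℤ)))) ≤
      (if i = 0 then ⊥ else Module.End.eigenspace A (b * q ^ (2 * ((i : ℤ) - 1) - (d : ℤ))))
        ⊔ Module.End.eigenspace A (b * q ^ (2 * (i : ℤ) - (d : ℤ)))
        ⊔ (if i = d then ⊥ else
            Module.End.eigenspace A (b * q ^ (2 * ((i : ℤ) + 1) - (d : ℤ))))) :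
    ∀ r : ℕ, 1 ≤ r →
      ∑ j ∈ Finset.range (2 * r + 2),
        ((-1 : K) ^ j * qBinom q (2 * r + 1) j) •
          (A ^ (2 * r + 1 - j) * Astar ^ r * A ^ j) = 0 :=
  stmt15_general K V q hq hqroot d b A Astar hsum htri
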